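/- arXiv:2103.14510 — 2 statements merged into one kernel-verified Lean document; each statement's English description precedes it below -/
import Mathlib

section
/- Let d ≥ 1, let σ be a positive semidefinite (d+1)×(d+1) complex matrix with trace 1 and σ·e_⊥ = 0, and let Π be a Hermitian (d+1)×(d+1) complex matrix with Π·σ = 0. Then tr(((1−Π) ⊗ (1−Π)) · V σ V†) = 1 − e_⊥† Π e_⊥, where 1 denotes the identity matrix and ⊗ is the Kronecker product. -/
open Matrix Kronecker
open scoped ComplexOrder

/-- The last standard basis vector `e_⊥ = e_d` of `ℂ^{d+1}`. -/
noncomputable def perp (d : ℕ) : Fin (d + 1) → ℂ :=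
  fun i => if i = Fin.last d then 1 else 0

/-- The cloning map `V : ℂ^{d+1} → ℂ^{d+1} ⊗ ℂ^{d+1}`,
`V_{(i,j),k} = (1/√2)(δ_{i,d} δ_{j,k} + δ_{i,k} δ_{j,d})`. -/
noncomputable def cloneV (d : ℕ) : Matrix (Fin (d + 1) × Fin (d + 1)) (Fin (d + 1)) ℂ :=
  fun p k => ((1 / Real.sqrt 2 : ℝ) : ℂ) *
    ((if p.1 = Fin.last d then 1 else 0) * (if p.2 = k then 1 else 0) +
     (if p.1 = k then 1 else 0) * (if p.2 = Fin.last d then 1 else 0))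

/-!
Cycling the trace, only the compression `V† ((1-Π) ⊗ (1-Π)) V` of the observable to `ℂ^{d+1}`
matters, and for any `Q` it equals `Q_⊥⊥ • Q + (Q e_⊥)(e_⊥† Q)`. Against `σ` the first term gives
`Q_⊥⊥ tr (Q σ) = Q_⊥⊥` because `Q σ = σ` for `Q = 1-Π`, and the second gives
`e_⊥† Q σ Q e_⊥ = (e_⊥† σ) Q e_⊥ = 0` because `σ` is Hermitian with `σ e_⊥ = 0`.
-/

theorem perp_eq_single (d : ℕ) : perp d = Pi.single (Fin.last d) 1 := by
  funext i
  simp [perp, Pi.single_apply]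

theorem conjTranspose_cloneV_mul_kronecker_mul_cloneV (d : ℕ)
    (A B : Matrix (Fin (d + 1)) (Fin (d + 1)) ℂ) :
    (cloneV d)ᴴ * (A ⊗ₖ B) * cloneV d = (1 / 2 : ℂ) •
      (B (Fin.last d) (Fin.last d) • A + A (Fin.last d) (Fin.last d) • B
        + vecMulVec (A.col (Fin.last d)) (B.row (Fin.last d))
        + vecMulVec (B.col (Fin.last d)) (A.row (Fin.last d))) := by
  have hc : (((1 / Real.sqrt 2 : ℝ) : ℂ)) * (((1 / Real.sqrt 2 : ℝ) : ℂ)) = 1 / 2 := by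
    rw [← Complex.ofReal_mul, one_div_mul_one_div, Real.mul_self_sqrt (by norm_num)]
    norm_num
  ext k l
  simp only [mul_apply, conjTranspose_apply, cloneV, kroneckerMap_apply, Fintype.sum_prod_type,
    Complex.star_def, Complex.conj_ofReal, map_add, apply_ite (starRingEnd ℂ), map_zero,
    mul_add, add_mul, ite_mul, mul_ite, zero_mul, mul_one, mul_zero, Finset.sum_add_distrib,
    Finset.sum_ite_eq', Finset.mem_univ, if_true]
  simp only [Matrix.smul_apply, Matrix.add_apply, vecMulVec_apply, col_apply, row_apply,
    smul_eq_mul]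
  linear_combination (B (Fin.last d) (Fin.last d) * A k l + A (Fin.last d) (Fin.last d) * B k l
    + A k (Fin.last d) * B (Fin.last d) l + B k (Fin.last d) * A (Fin.last d) l) * hc

theorem trace_kronecker_self_mul_cloneV_conj (d : ℕ)
    (A σ : Matrix (Fin (d + 1)) (Fin (d + 1)) ℂ) :
    trace ((A ⊗ₖ A) * (cloneV d * σ * (cloneV d)ᴴ)) =
      A (Fin.last d) (Fin.last d) * trace (A * σ)
        + A.col (Fin.last d) ⬝ᵥ (A * σ).row (Fin.last d) := by
  have hrow : A.row (Fin.last d) ᵥ* σ = (A * σ).row (Fin.last d) := rfl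
  calc trace ((A ⊗ₖ A) * (cloneV d * σ * (cloneV d)ᴴ))
      = trace ((A ⊗ₖ A) * cloneV d * σ * (cloneV d)ᴴ) := by simp only [Matrix.mul_assoc]
    _ = trace ((cloneV d)ᴴ * (A ⊗ₖ A) * cloneV d * σ) := by
        rw [trace_mul_comm]; simp only [Matrix.mul_assoc]
    _ = _ := by
        rw [conjTranspose_cloneV_mul_kronecker_mul_cloneV]
        simp only [Matrix.smul_mul, Matrix.add_mul, vecMulVec_mul, trace_smul, trace_add,
          trace_vecMulVec, hrow, smul_eq_mul]
        ring

theorem Matrix.IsHermitian.row_eq_zero_of_col_eq_zero {n : Type*} [Fintype n]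
    {σ : Matrix n n ℂ} (hσ : σ.IsHermitian) {i : n} (h : σ.col i = 0) : σ.row i = 0 := by
  funext j
  rw [row_apply, ← hσ.apply, show σ j i = σ.col i j from rfl, h, Pi.zero_apply, star_zero]

theorem trace_kronecker_clone_complement_general (d : ℕ)
    (σ P : Matrix (Fin (d + 1)) (Fin (d + 1)) ℂ)
    (hσ : σ.PosSemidef) (htr : Matrix.trace σ = 1) (hσperp : σ *ᵥ perp d = 0)
    (hPσ : P * σ = 0) :
    Matrix.trace (((1 - P) ⊗ₖ (1 - P)) * (cloneV d * σ * (cloneV d)ᴴ)) =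
      1 - star (perp d) ⬝ᵥ (P *ᵥ perp d) := by
  have hQσ : (1 - P) * σ = σ := by rw [Matrix.sub_mul, Matrix.one_mul, hPσ, sub_zero]
  rw [perp_eq_single, mulVec_single_one] at hσperp
  have hrow : σ.row (Fin.last d) = 0 := hσ.isHermitian.row_eq_zero_of_col_eq_zero hσperp
  rw [trace_kronecker_self_mul_cloneV_conj, hQσ, htr, hrow, dotProduct_zero, mul_one, add_zero,
    perp_eq_single, mulVec_single_one, Pi.star_single, star_one, single_one_dotProduct,
    col_apply, Matrix.sub_apply, one_apply_eq]

/-- For a density matrix `σ` with `σ e_⊥ = 0` and a Hermitian `Π` with `Π σ = 0`,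
`tr(((1−Π) ⊗ (1−Π)) V σ V†) = 1 − e_⊥† Π e_⊥`. -/
theorem trace_kronecker_clone_complement (d : ℕ) (hd : 1 ≤ d)
    (σ P : Matrix (Fin (d + 1)) (Fin (d + 1)) ℂ)
    (hσ : σ.PosSemidef) (htr : Matrix.trace σ = 1) (hσperp : σ *ᵥ perp d = 0)
    (hP : Pᴴ = P) (hPσ : P * σ = 0) :
    Matrix.trace (((1 - P) ⊗ₖ (1 - P)) * (cloneV d * σ * (cloneV d)ᴴ)) =
      1 - star (perp d) ⬝ᵥ (P *ᵥ perp d) :=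
  trace_kronecker_clone_complement_general d σ P hσ htr hσperp hPσ
end

section
/- Let (Ω, 𝒫) be a probability space, n ≥ 1, λ > 0, a ≥ 0, and let k : Fin n → ℕ with k i ≥ 1 for all i. Let X : Fin n → Ω → ℝ be mutually independent random variables such that the law of X i is gammaMeasure (k i) λ (the Erlang(k i, λ) distribution). Then 𝒫{ ω | ∀ i ∈ Fin n, X i ω < a } ≤ ENNReal.ofReal( exp( − n · e^{−λa} ) ). In words: the probability that the maximum of the X_i is below a is at most exp(−n·e^{−λa}). -/
/-!
For shape `α ≥ 1`, shifting the gamma density `f` by `a ≥ 0` costs at most a factor `e^{-ra}`: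
`e^{-ra} f(t) ≤ f(t + a)`, because `t ↦ t^{α-1}` is nondecreasing on `[0, ∞)`. Integrating
gives `P(X ≥ a) ≥ e^{-ra}`, hence `P(X < a) ≤ 1 - e^{-ra} ≤ exp(-e^{-ra})`, and independence turns
the `n` factors into `exp(-n e^{-ra})`.
-/

open MeasureTheory ProbabilityTheory Set Real

namespace ProbabilityTheory

variable {α r a : ℝ}

lemma exp_neg_mul_mul_gammaPDFReal_le_add (hα : 1 ≤ α) (hr : 0 < r) (ha : 0 ≤ a) (t : ℝ) :
    exp (-(r * a)) * gammaPDFReal α r t ≤ gammaPDFReal α r (t + a) := by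
  rcases lt_or_ge t 0 with ht | ht
  · simpa [gammaPDFReal, if_neg (not_le.mpr ht)]
      using gammaPDFReal_nonneg (by linarith) hr (t + a)
  · have hpow : t ^ (α - 1) ≤ (t + a) ^ (α - 1) :=
      rpow_le_rpow ht (by linarith) (by linarith)
    rw [gammaPDFReal, gammaPDFReal, if_pos ht, if_pos (by linarith), mul_add, neg_add, exp_add]
    calc exp (-(r * a)) * (r ^ α / Gamma α * t ^ (α - 1) * exp (-(r * t)))
        = r ^ α / Gamma α * t ^ (α - 1) * (exp (-(r * t)) * exp (-(r * a))) := by ring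
      _ ≤ r ^ α / Gamma α * (t + a) ^ (α - 1) * (exp (-(r * t)) * exp (-(r * a))) := by gcongr

lemma ofReal_exp_neg_mul_mul_gammaPDF_le_indicator (hα : 1 ≤ α) (hr : 0 < r) (ha : 0 ≤ a)
    (t : ℝ) :
    ENNReal.ofReal (exp (-(r * a))) * gammaPDF α r t ≤
      (Ici a).indicator (gammaPDF α r) (t + a) := by
  rcases lt_or_ge t 0 with ht | ht
  · simp [gammaPDF_of_neg ht]
  · rw [indicator_of_mem (by simpa using ht), gammaPDF, gammaPDF,
      ← ENNReal.ofReal_mul (exp_pos _).le]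
    exact ENNReal.ofReal_le_ofReal (exp_neg_mul_mul_gammaPDFReal_le_add hα hr ha t)

lemma ofReal_exp_neg_mul_le_gammaMeasure_Ici (hα : 1 ≤ α) (hr : 0 < r) (ha : 0 ≤ a) :
    ENNReal.ofReal (exp (-(r * a))) ≤ gammaMeasure α r (Ici a) :=
  calc ENNReal.ofReal (exp (-(r * a)))
      = ENNReal.ofReal (exp (-(r * a))) * ∫⁻ t, gammaPDF α r t := by
        rw [lintegral_gammaPDF_eq_one (by linarith) hr, mul_one]
    _ = ∫⁻ t, ENNReal.ofReal (exp (-(r * a))) * gammaPDF α r t :=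
        (lintegral_const_mul' _ _ ENNReal.ofReal_ne_top).symm
    _ ≤ ∫⁻ t, (Ici a).indicator (gammaPDF α r) (t + a) :=
        lintegral_mono (ofReal_exp_neg_mul_mul_gammaPDF_le_indicator hα hr ha)
    _ = gammaMeasure α r (Ici a) := by
        rw [lintegral_add_right_eq_self, lintegral_indicator measurableSet_Ici, gammaMeasure,
          withDensity_apply _ measurableSet_Ici]

lemma gammaMeasure_Iio_le (hα : 1 ≤ α) (hr : 0 < r) (ha : 0 ≤ a) :
    gammaMeasure α r (Iio a) ≤ ENNReal.ofReal (1 - exp (-(r * a))) := by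
  have := isProbabilityMeasure_gammaMeasure (by linarith : 0 < α) hr
  rw [← compl_Ici, prob_compl_eq_one_sub measurableSet_Ici, ENNReal.ofReal_sub _ (exp_pos _).le,
    ENNReal.ofReal_one]
  exact tsub_le_tsub_left (ofReal_exp_neg_mul_le_gammaMeasure_Ici hα hr ha) 1

end ProbabilityTheory

lemma Real.one_sub_pow_le_exp_neg_mul {y : ℝ} (hy : y ≤ 1) (n : ℕ) :
    (1 - y) ^ n ≤ exp (-(n * y)) := by
  rw [neg_mul_eq_mul_neg, exp_nat_mul]
  exact pow_le_pow_left₀ (by linarith) (one_sub_le_exp_neg y) n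

theorem prob_max_erlang_lt_le_general
    {Ω : Type} [MeasurableSpace Ω] (Pr : Measure Ω) [IsProbabilityMeasure Pr]
    (n : ℕ) (lam : ℝ) (hlam : 0 < lam) (a : ℝ) (ha : 0 ≤ a)
    (k : Fin n → ℕ) (hk : ∀ i, 1 ≤ k i)
    (X : Fin n → Ω → ℝ)
    (hindep : iIndepFun X Pr)
    (hlaw : ∀ i, Measure.map (X i) Pr = gammaMeasure (k i : ℝ) lam) :
    Pr {ω | ∀ i : Fin n, X i ω < a} ≤
      ENNReal.ofReal (Real.exp (-((n : ℝ) * Real.exp (-(lam * a))))) := by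
  have hfactor (i : Fin n) : Pr (X i ⁻¹' Iio a) ≤ ENNReal.ofReal (1 - exp (-(lam * a))) := by
    have hprob := isProbabilityMeasure_gammaMeasure (a := k i) (by exact_mod_cast hk i) hlam
    have hX : AEMeasurable (X i) Pr := .of_map_ne_zero (hlaw i ▸ hprob.ne_zero)
    rw [← Measure.map_apply_of_aemeasurable hX measurableSet_Iio, hlaw i]
    exact gammaMeasure_Iio_le (by exact_mod_cast hk i) hlam ha
  have hexp : exp (-(lam * a)) ≤ 1 := exp_le_one_iff.mpr (neg_nonpos.mpr (mul_nonneg hlam.le ha))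
  have hset : {ω | ∀ i : Fin n, X i ω < a} = ⋂ i ∈ Finset.univ, X i ⁻¹' Iio a := by
    ext ω; simp
  calc Pr {ω | ∀ i : Fin n, X i ω < a}
      = ∏ i, Pr (X i ⁻¹' Iio a) := by
        rw [hset, hindep.measure_inter_preimage_eq_mul _ fun _ _ => measurableSet_Iio]
    _ ≤ ∏ _i : Fin n, ENNReal.ofReal (1 - exp (-(lam * a))) :=
        Finset.prod_le_prod' fun i _ => hfactor i
    _ = ENNReal.ofReal ((1 - exp (-(lam * a))) ^ n) := by
        rw [Finset.prod_const, Finset.card_univ, Fintype.card_fin,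
          ENNReal.ofReal_pow (sub_nonneg.mpr hexp)]
    _ ≤ ENNReal.ofReal (exp (-((n : ℝ) * exp (-(lam * a))))) :=
        ENNReal.ofReal_le_ofReal (one_sub_pow_le_exp_neg_mul hexp n)

/-- For independent `X_i ∼ Erlang(k_i, λ)`, the probability that all `X_i` lie below `a`
(i.e. that the maximum is below `a`) is at most `exp(−n·e^{−λa})`. -/
theorem prob_max_erlang_lt_le
    {Ω : Type} [MeasurableSpace Ω] (Pr : Measure Ω) [IsProbabilityMeasure Pr]
    (n : ℕ) (hn : 1 ≤ n) (lam : ℝ) (hlam : 0 < lam) (a : ℝ) (ha : 0 ≤ a)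
    (k : Fin n → ℕ) (hk : ∀ i, 1 ≤ k i)
    (X : Fin n → Ω → ℝ)
    (hindep : iIndepFun X Pr)
    (hlaw : ∀ i, Measure.map (X i) Pr = gammaMeasure (k i : ℝ) lam) :
    Pr {ω | ∀ i : Fin n, X i ω < a} ≤
      ENNReal.ofReal (Real.exp (-((n : ℝ) * Real.exp (-(lam * a))))) :=
  prob_max_erlang_lt_le_general Pr n lam hlam a ha k hk X hindep hlaw
end
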